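/- arXiv:2206.06455 — 8 statements merged into one kernel-verified Lean document; each statement's English description precedes it below -/
import Mathlib

section
/- Let p ∈ Y be the solution of ⟨A p, v⟩ = ⟨B u, v⟩ for all v ∈ Y (i.e., p = A⁻¹ B u). Then ⟨B u, p⟩ ≥ c₁ᴬ (c₁ᴮ / c₂ᴬ)² ‖u‖_X², i.e., the Schur complement operator S = B* A⁻¹ B satisfies ⟨S u, u⟩ ≥ c₁ˢ ‖u‖_X² with c₁ˢ = c₁ᴬ (c₁ᴮ / c₂ᴬ)². -/
open scoped RealInnerProductSpace

/-!
Testing the inf-sup condition against `B u = A p` bounds `c₁ᴮ ‖u‖` by the dual norm of `A p`,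
hence by `c₂ᴬ ‖p‖`; coercivity of `A` then gives `⟨B u, p⟩ = ⟨A p, p⟩ ≥ c₁ᴬ ‖p‖²`.
-/

theorem ContinuousLinearMap.iSup_div_norm_le_opNorm {E : Type*} [NormedAddCommGroup E]
    [NormedSpace ℝ E] (f : StrongDual ℝ E) :
    ⨆ v : {v : E // v ≠ 0}, f v / ‖(v : E)‖ ≤ ‖f‖ := by
  refine Real.iSup_le (fun ⟨v, hv⟩ => ?_) (norm_nonneg f)
  rw [div_le_iff₀ (norm_pos_iff.mpr hv)]
  exact (le_abs_self _).trans (f.le_opNorm v)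

-- The junk value `b / 0 = 0` makes the case `c = 0` hold trivially.
theorem mul_div_sq_le_mul_sq_of_le_mul {a b c y : ℝ} (ha : 0 ≤ a) (hb : 0 ≤ b)
    (h : b ≤ c * y) : a * (b / c) ^ 2 ≤ a * y ^ 2 := by
  rcases eq_or_ne c 0 with rfl | hc
  · simpa using mul_nonneg ha (sq_nonneg y)
  refine mul_le_mul_of_nonneg_left ?_ ha
  rw [div_pow, div_le_iff₀ (by positivity), ← mul_pow, mul_comm y]
  exact pow_le_pow_left₀ hb h 2

theorem stmt_0_general
    {X Y : Type*} [NormedAddCommGroup X] [NormedSpace ℝ X]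
    [NormedAddCommGroup Y] [InnerProductSpace ℝ Y]
    (A : Y →L[ℝ] StrongDual ℝ Y) (B : X →L[ℝ] StrongDual ℝ Y)
    (c₁A c₂A c₁B : ℝ)
    (hc₁A : 0 < c₁A) (hc₁B : 0 < c₁B)
    (hA2 : ∀ v : Y, ‖A v‖ ≤ c₂A * ‖v‖)
    (hA1 : ∀ v : Y, c₁A * ‖v‖ ^ 2 ≤ A v v)
    (hinfsup : ∀ u : X, c₁B * ‖u‖ ≤ ⨆ v : {v : Y // v ≠ 0}, B u v / ‖(v : Y)‖)
    (u : X) (p : Y)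
    (hp : ∀ v : Y, A p v = B u v) :
    c₁A * (c₁B / c₂A) ^ 2 * ‖u‖ ^ 2 ≤ B u p := by
  have hBu : B u = A p := (ContinuousLinearMap.ext hp).symm
  have hu : c₁B * ‖u‖ ≤ c₂A * ‖p‖ := by
    have := hinfsup u
    rw [hBu] at this
    exact this.trans ((A p).iSup_div_norm_le_opNorm.trans (hA2 p))
  calc c₁A * (c₁B / c₂A) ^ 2 * ‖u‖ ^ 2
      = c₁A * (c₁B * ‖u‖ / c₂A) ^ 2 := by ring
    _ ≤ c₁A * ‖p‖ ^ 2 := mul_div_sq_le_mul_sq_of_le_mul hc₁A.le (by positivity) hu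
    _ ≤ B u p := hBu ▸ hA1 p

/-- The Schur complement operator `S = B* A⁻¹ B` is coercive:
if `p = A⁻¹ B u`, then `⟨B u, p⟩ = ⟨S u, u⟩ ≥ c₁ᴬ (c₁ᴮ / c₂ᴬ)² ‖u‖²`. -/
theorem stmt_0
    {X Y : Type*} [NormedAddCommGroup X] [NormedSpace ℝ X]
    [NormedAddCommGroup Y] [InnerProductSpace ℝ Y]
    (A : Y →L[ℝ] StrongDual ℝ Y) (B : X →L[ℝ] StrongDual ℝ Y)
    (c₁A c₂A c₁B c₂B : ℝ)
    (hc₁A : 0 < c₁A) (hc₁B : 0 < c₁B)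
    (hA2 : ∀ v : Y, ‖A v‖ ≤ c₂A * ‖v‖)
    (hB2 : ∀ u : X, ‖B u‖ ≤ c₂B * ‖u‖)
    (hA1 : ∀ v : Y, c₁A * ‖v‖ ^ 2 ≤ A v v)
    (hinfsup : ∀ u : X, c₁B * ‖u‖ ≤ ⨆ v : {v : Y // v ≠ 0}, B u v / ‖(v : Y)‖)
    (u : X) (p : Y)
    (hp : ∀ v : Y, A p v = B u v) :
    c₁A * (c₁B / c₂A) ^ 2 * ‖u‖ ^ 2 ≤ B u p :=
  stmt_0_general A B c₁A c₂A c₁B hc₁A hc₁B hA2 hA1 hinfsup u p hp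
end

section
/- For a target ū ∈ H, the solution u_ρ of the regularized variational problem satisfies the error estimate ‖ι u_ρ − ū‖_H ≤ ‖ū‖_H. -/
open scoped RealInnerProductSpace

theorem norm_sub_le_norm_of_norm_sq_le_inner {E : Type*} [NormedAddCommGroup E]
    [InnerProductSpace ℝ E] {x y : E} (h : ‖x‖ ^ 2 ≤ ⟪x, y⟫) : ‖x - y‖ ≤ ‖y‖ := by
  -- `‖x - y‖² = ‖y‖² - ‖x‖² - 2 (⟪x, y⟫ - ‖x‖²)`
  have hsq : ‖x - y‖ ^ 2 ≤ ‖y‖ ^ 2 := by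
    rw [norm_sub_sq_real]
    nlinarith [sq_nonneg ‖x‖]
  exact (pow_le_pow_iff_left₀ (norm_nonneg _) (norm_nonneg _) two_ne_zero).mp hsq

theorem stmt_7_general
    {H X : Type*} [NormedAddCommGroup H] [InnerProductSpace ℝ H]
    [NormedAddCommGroup X] [NormedSpace ℝ X]
    (ι : X →L[ℝ] H) (S : X →L[ℝ] StrongDual ℝ X)
    (hpsd : ∀ u : X, 0 ≤ S u u)
    (ρ : ℝ) (hρ : 0 < ρ) (ubar : H) (uρ : X)
    (hvar : ∀ v : X, ρ * S uρ v + ⟪ι uρ, ι v⟫ = ⟪ubar, ι v⟫) :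
    ‖ι uρ - ubar‖ ≤ ‖ubar‖ := by
  apply norm_sub_le_norm_of_norm_sq_le_inner
  have htest := hvar uρ
  rw [real_inner_self_eq_norm_sq, real_inner_comm] at htest
  nlinarith [mul_nonneg hρ.le (hpsd uρ)]

/-- Error estimate for `ū ∈ H`: `‖ι u_ρ − ū‖_H ≤ ‖ū‖_H`. -/
theorem stmt_7
    {H X : Type*} [NormedAddCommGroup H] [InnerProductSpace ℝ H]
    [NormedAddCommGroup X] [NormedSpace ℝ X]
    (ι : X →L[ℝ] H) (S : X →L[ℝ] StrongDual ℝ X)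
    (hsym : ∀ u v : X, S u v = S v u)
    (hpsd : ∀ u : X, 0 ≤ S u u)
    (ρ : ℝ) (hρ : 0 < ρ) (ubar : H) (uρ : X)
    (hvar : ∀ v : X, ρ * S uρ v + ⟪ι uρ, ι v⟫ = ⟪ubar, ι v⟫) :
    ‖ι uρ - ubar‖ ≤ ‖ubar‖ :=
  stmt_7_general ι S hpsd ρ hρ ubar uρ hvar
end

section
/- If the target belongs to X, i.e., ū = ι ū₀ with ū₀ ∈ X, then the solution u_ρ of the regularized variational problem satisfies the error estimate ‖ι u_ρ − ū‖_H ≤ ρ^{1/2} ‖ū₀‖_S, where ‖ū₀‖_S = √⟨S ū₀, ū₀⟩. -/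
open scoped RealInnerProductSpace

/-!
Testing the variational equation with `v = u_ρ - ū₀` gives
`‖ι u_ρ - ι ū₀‖² = ρ ⟨S u_ρ, ū₀ - u_ρ⟩`, and expanding `‖ū₀ - u_ρ‖_S² ≥ 0` shows
`2 ⟨S u_ρ, ū₀ - u_ρ⟩ ≤ ‖ū₀‖_S² - ‖u_ρ‖_S²`; so the squared error is even at most `ρ ‖ū₀‖_S² / 2`.
-/

lemma LinearMap.BilinForm.two_mul_apply_sub_le {M : Type*} [AddCommGroup M] [Module ℝ M]
    (B : LinearMap.BilinForm ℝ M) (hsym : ∀ u v, B u v = B v u) (hpsd : ∀ u, 0 ≤ B u u)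
    (u w : M) : 2 * B u (w - u) ≤ B w w - B u u := by
  have h := hpsd (w - u)
  simp only [map_sub, LinearMap.sub_apply, hsym w u] at h ⊢
  linarith

lemma norm_map_sub_sq_eq_of_variational {H X : Type*} [NormedAddCommGroup H]
    [InnerProductSpace ℝ H] [NormedAddCommGroup X] [NormedSpace ℝ X]
    (ι : X →L[ℝ] H) (S : X →L[ℝ] StrongDual ℝ X) (ρ : ℝ) (u w : X)
    (hvar : ∀ v : X, ρ * S u v + ⟪ι u, ι v⟫ = ⟪ι w, ι v⟫) :
    ‖ι u - ι w‖ ^ 2 = ρ * S u (w - u) := by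
  have h := hvar (u - w)
  rw [← real_inner_self_eq_norm_sq, inner_sub_left, ← map_sub, ← neg_sub u w, map_neg]
  linarith

/-- If the target belongs to `X`, i.e. `ū = ι ū₀`, then
`‖ι u_ρ − ū‖_H ≤ ρ^{1/2} ‖ū₀‖_S`, where `‖ū₀‖_S = √⟨S ū₀, ū₀⟩`. -/
theorem stmt_9
    {H X : Type*} [NormedAddCommGroup H] [InnerProductSpace ℝ H]
    [NormedAddCommGroup X] [NormedSpace ℝ X]
    (ι : X →L[ℝ] H) (S : X →L[ℝ] StrongDual ℝ X)
    (hsym : ∀ u v : X, S u v = S v u)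
    (hpsd : ∀ u : X, 0 ≤ S u u)
    (ρ : ℝ) (hρ : 0 < ρ) (ubar : H) (uρ : X)
    (hvar : ∀ v : X, ρ * S uρ v + ⟪ι uρ, ι v⟫ = ⟪ubar, ι v⟫)
    (ubar₀ : X) (htarget : ubar = ι ubar₀) :
    ‖ι uρ - ubar‖ ≤ Real.sqrt ρ * Real.sqrt (S ubar₀ ubar₀) := by
  subst htarget
  have herr := norm_map_sub_sq_eq_of_variational ι S ρ uρ ubar₀ hvar
  have hS : 2 * S uρ (ubar₀ - uρ) ≤ S ubar₀ ubar₀ - S uρ uρ :=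
    LinearMap.BilinForm.two_mul_apply_sub_le S.toLinearMap₁₂ hsym hpsd uρ ubar₀
  rw [← Real.sqrt_mul hρ.le, Real.le_sqrt (norm_nonneg _) (mul_nonneg hρ.le (hpsd ubar₀)), herr]
  nlinarith [hpsd uρ, hpsd ubar₀]
end

section
/- If the target belongs to X, i.e., ū = ι ū₀ with ū₀ ∈ X, then the solution u_ρ of the regularized variational problem satisfies the error estimate in the energy seminorm ‖u_ρ − ū₀‖_S ≤ ‖ū₀‖_S, where ‖w‖_S = √⟨S w, w⟩. -/
open scoped RealInnerProductSpace

/-!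
Put `e = u_ρ - ū₀`. Testing the variational equation with `v = e` gives
`ρ ⟨S u_ρ, e⟩ = -‖ι e‖² ≤ 0`, and then expanding `‖ū₀‖_S² = ‖u_ρ - e‖_S²` yields
`‖ū₀‖_S² = ‖u_ρ‖_S² - 2 ⟨S u_ρ, e⟩ + ‖e‖_S² ≥ ‖e‖_S²`.
-/

section SymmetricForm

variable {X : Type*} [NormedAddCommGroup X] [NormedSpace ℝ X] (S : X →L[ℝ] StrongDual ℝ X)

lemma apply_sub_sub_of_symm (hsym : ∀ u v : X, S u v = S v u) (u e : X) :
    S (u - e) (u - e) = S u u - 2 * S u e + S e e := by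
  simp only [map_sub, sub_apply, hsym e u]
  ring

lemma apply_self_le_apply_sub_of_apply_nonpos (hsym : ∀ u v : X, S u v = S v u)
    (hpsd : ∀ u : X, 0 ≤ S u u) {u e : X} (hue : S u e ≤ 0) :
    S e e ≤ S (u - e) (u - e) := by
  rw [apply_sub_sub_of_symm S hsym]
  linarith [hpsd u]

end SymmetricForm

section Regularization

variable {H X : Type*} [NormedAddCommGroup H] [InnerProductSpace ℝ H]
  [NormedAddCommGroup X] [NormedSpace ℝ X] (ι : X →L[ℝ] H) (S : X →L[ℝ] StrongDual ℝ X)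

lemma mul_apply_eq_neg_inner_of_variational {ρ : ℝ} {u u₀ : X}
    (hvar : ∀ v : X, ρ * S u v + ⟪ι u, ι v⟫ = ⟪ι u₀, ι v⟫) (v : X) :
    ρ * S u v = -⟪ι (u - u₀), ι v⟫ := by
  rw [map_sub, inner_sub_left]
  linarith [hvar v]

lemma apply_sub_target_nonpos {ρ : ℝ} (hρ : 0 < ρ) {u u₀ : X}
    (hvar : ∀ v : X, ρ * S u v + ⟪ι u, ι v⟫ = ⟪ι u₀, ι v⟫) :
    S u (u - u₀) ≤ 0 := by
  have h := mul_apply_eq_neg_inner_of_variational ι S hvar (u - u₀)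
  rw [real_inner_self_eq_norm_sq] at h
  exact nonpos_of_mul_nonpos_right (h ▸ neg_nonpos.mpr (sq_nonneg _)) hρ

end Regularization

/-- If the target belongs to `X`, i.e. `ū = ι ū₀`, then
`‖u_ρ − ū₀‖_S ≤ ‖ū₀‖_S`, where `‖w‖_S = √⟨S w, w⟩`. -/
theorem stmt_10
    {H X : Type*} [NormedAddCommGroup H] [InnerProductSpace ℝ H]
    [NormedAddCommGroup X] [NormedSpace ℝ X]
    (ι : X →L[ℝ] H) (S : X →L[ℝ] StrongDual ℝ X)
    (hsym : ∀ u v : X, S u v = S v u)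
    (hpsd : ∀ u : X, 0 ≤ S u u)
    (ρ : ℝ) (hρ : 0 < ρ) (ubar : H) (uρ : X)
    (hvar : ∀ v : X, ρ * S uρ v + ⟪ι uρ, ι v⟫ = ⟪ubar, ι v⟫)
    (ubar₀ : X) (htarget : ubar = ι ubar₀) :
    Real.sqrt (S (uρ - ubar₀) (uρ - ubar₀)) ≤ Real.sqrt (S ubar₀ ubar₀) := by
  subst htarget
  apply Real.sqrt_le_sqrt
  have hnonpos := apply_sub_target_nonpos ι S hρ hvar
  simpa only [sub_sub_cancel] using
    apply_self_le_apply_sub_of_apply_nonpos S hsym hpsd hnonpos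
end

section
/- Suppose the target belongs to X, i.e., ū = ι ū₀ with ū₀ ∈ X, and in addition S ū₀ is represented in H, i.e., there exists g ∈ H with ⟨S ū₀, v⟩ = ⟨g, ι v⟩_H for all v ∈ X. Then the solution u_ρ of the regularized variational problem satisfies ‖ι u_ρ − ū‖_H ≤ ρ ‖g‖_H. -/
open scoped RealInnerProductSpace

theorem norm_le_of_norm_sq_le_inner {E : Type*} [NormedAddCommGroup E] [InnerProductSpace ℝ E]
    {x y : E} (h : ‖x‖ ^ 2 ≤ ⟪y, x⟫) : ‖x‖ ≤ ‖y‖ := by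
  have hxy : ‖x‖ * ‖x‖ ≤ ‖y‖ * ‖x‖ := by
    nlinarith [real_inner_le_norm y x]
  rcases (norm_nonneg x).eq_or_lt with hx | hx
  · rw [← hx]; exact norm_nonneg y
  · exact le_of_mul_le_mul_right hxy hx

theorem regularized_error_eq {H X : Type*} [NormedAddCommGroup H] [InnerProductSpace ℝ H]
    [NormedAddCommGroup X] [NormedSpace ℝ X]
    (ι : X →L[ℝ] H) (S : X →L[ℝ] StrongDual ℝ X) (ρ : ℝ) (uρ ubar₀ : X)
    (hvar : ∀ v : X, ρ * S uρ v + ⟪ι uρ, ι v⟫ = ⟪ι ubar₀, ι v⟫) (v : X) :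
    ρ * S (uρ - ubar₀) v + ⟪ι (uρ - ubar₀), ι v⟫ = -(ρ * S ubar₀ v) := by
  rw [map_sub, sub_apply, map_sub, inner_sub_left]
  linarith [hvar v]

theorem stmt_11_general
    {H X : Type*} [NormedAddCommGroup H] [InnerProductSpace ℝ H]
    [NormedAddCommGroup X] [NormedSpace ℝ X]
    (ι : X →L[ℝ] H) (S : X →L[ℝ] StrongDual ℝ X)
    (hpsd : ∀ u : X, 0 ≤ S u u)
    (ρ : ℝ) (hρ : 0 < ρ) (ubar : H) (uρ : X)
    (hvar : ∀ v : X, ρ * S uρ v + ⟪ι uρ, ι v⟫ = ⟪ubar, ι v⟫)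
    (ubar₀ : X) (htarget : ubar = ι ubar₀)
    (g : H) (hg : ∀ v : X, S ubar₀ v = ⟪g, ι v⟫) :
    ‖ι uρ - ubar‖ ≤ ρ * ‖g‖ := by
  subst htarget
  set e := uρ - ubar₀
  have herr := regularized_error_eq ι S ρ uρ ubar₀ hvar e
  rw [hg, real_inner_self_eq_norm_sq] at herr
  -- `S` is positive semidefinite, so dropping `ρ ⟨S e, e⟩` from the error equation leaves an upper bound.
  have hsq : ‖ι e‖ ^ 2 ≤ ⟪-ρ • g, ι e⟫ := by
    rw [real_inner_smul_left]
    linarith [mul_nonneg hρ.le (hpsd e)]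
  calc ‖ι uρ - ι ubar₀‖ = ‖ι e‖ := by rw [map_sub]
    _ ≤ ‖-ρ • g‖ := norm_le_of_norm_sq_le_inner hsq
    _ = ρ * ‖g‖ := by rw [norm_smul, norm_neg, Real.norm_of_nonneg hρ.le]

/-- If `ū = ι ū₀` and `S ū₀` is represented in `H` by `g`, then
`‖ι u_ρ − ū‖_H ≤ ρ ‖g‖_H`. -/
theorem stmt_11
    {H X : Type*} [NormedAddCommGroup H] [InnerProductSpace ℝ H]
    [NormedAddCommGroup X] [NormedSpace ℝ X]
    (ι : X →L[ℝ] H) (S : X →L[ℝ] StrongDual ℝ X)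
    (hsym : ∀ u v : X, S u v = S v u)
    (hpsd : ∀ u : X, 0 ≤ S u u)
    (ρ : ℝ) (hρ : 0 < ρ) (ubar : H) (uρ : X)
    (hvar : ∀ v : X, ρ * S uρ v + ⟪ι uρ, ι v⟫ = ⟪ubar, ι v⟫)
    (ubar₀ : X) (htarget : ubar = ι ubar₀)
    (g : H) (hg : ∀ v : X, S ubar₀ v = ⟪g, ι v⟫) :
    ‖ι uρ - ubar‖ ≤ ρ * ‖g‖ :=
  stmt_11_general ι S hpsd ρ hρ ubar uρ hvar ubar₀ htarget g hg
end

section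
/- Let X_h be a subspace of X and let u_{ρh} ∈ X_h be the Galerkin solution, i.e., ρ ⟨S u_{ρh}, v_h⟩ + ⟨ι u_{ρh}, ι v_h⟩_H = ⟨ū, ι v_h⟩_H for all v_h ∈ X_h. Then the Cea-type a priori error estimate holds: for every v_h ∈ X_h, ‖ι(u_ρ − u_{ρh})‖_H ≤ √( ρ ⟨S(u_ρ − v_h), u_ρ − v_h⟩ + ‖ι(u_ρ − v_h)‖_H² ). -/
open scoped RealInnerProductSpace

/-!
Galerkin orthogonality makes the discretization error `e = u_ρ - u_{ρh}` orthogonal to `X_h` for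
the energy form `a(u, v) = ρ ⟨S u, v⟩ + ⟪ι u, ι v⟫_H`. Hence for `v_h ∈ X_h` Pythagoras gives
`a(u_ρ - v_h, u_ρ - v_h) = a(e, e) + a(u_{ρh} - v_h, u_{ρh} - v_h) ≥ a(e, e) ≥ ‖ι e‖²`.
-/

namespace LinearMap.BilinForm

section Semiring

variable {R M : Type*} [CommSemiring R] [PartialOrder R] [IsOrderedAddMonoid R]
  [AddCommMonoid M] [Module R M] {B : LinearMap.BilinForm R M}

theorem IsPosSemidef.apply_self_le_apply_add_self (hB : B.IsPosSemidef) {e d : M}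
    (h : B e d = 0) : B e e ≤ B (e + d) (e + d) := by
  have hde : B d e = 0 := (hB.isSymm.eq d e).trans h
  calc B e e ≤ B e e + B d d := le_add_of_nonneg_right (hB.isNonneg.nonneg d)
    _ = B (e + d) (e + d) := by
      simp only [map_add, LinearMap.add_apply, h, hde]
      abel

end Semiring

variable {R M : Type*} [CommRing R] [PartialOrder R] [IsOrderedAddMonoid R]
  [AddCommGroup M] [Module R M] {B : LinearMap.BilinForm R M}

theorem IsPosSemidef.apply_self_le_of_galerkin_orthogonal (hB : B.IsPosSemidef)
    {K : Submodule R M} {u uh : M} (huh : uh ∈ K) (horth : ∀ w ∈ K, B (u - uh) w = 0)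
    {v : M} (hv : v ∈ K) : B (u - uh) (u - uh) ≤ B (u - v) (u - v) := by
  have hsplit : u - v = (u - uh) + (uh - v) := by abel
  rw [hsplit]
  exact hB.apply_self_le_apply_add_self (horth _ (K.sub_mem huh hv))

end LinearMap.BilinForm

section EnergyForm

variable {H X : Type*} [NormedAddCommGroup H] [InnerProductSpace ℝ H]
  [AddCommGroup X] [Module ℝ X] [TopologicalSpace X]

noncomputable def energyForm (ι : X →L[ℝ] H) (S : X →L[ℝ] StrongDual ℝ X) (ρ : ℝ) :
    LinearMap.BilinForm ℝ X :=
  ρ • (ContinuousLinearMap.coeLM ℝ ∘ₗ (S : X →ₗ[ℝ] StrongDual ℝ X)) +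
    (innerₗ H).compl₁₂ (ι : X →ₗ[ℝ] H) ι

variable {ι : X →L[ℝ] H} {S : X →L[ℝ] StrongDual ℝ X} {ρ : ℝ}

@[simp]
theorem energyForm_apply (u v : X) : energyForm ι S ρ u v = ρ * S u v + ⟪ι u, ι v⟫ := rfl

theorem energyForm_apply_self (u : X) : energyForm ι S ρ u u = ρ * S u u + ‖ι u‖ ^ 2 := by
  rw [energyForm_apply, real_inner_self_eq_norm_sq]

theorem isPosSemidef_energyForm (hsym : ∀ u v : X, S u v = S v u) (hpsd : ∀ u : X, 0 ≤ S u u)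
    (hρ : 0 ≤ ρ) : (energyForm ι S ρ).IsPosSemidef where
  eq u v := by simp only [energyForm_apply, hsym u v, real_inner_comm]
  nonneg u := by
    rw [energyForm_apply_self]
    exact add_nonneg (mul_nonneg hρ (hpsd u)) (sq_nonneg _)

theorem sq_norm_le_energyForm_apply_self (hpsd : ∀ u : X, 0 ≤ S u u) (hρ : 0 ≤ ρ) (u : X) :
    ‖ι u‖ ^ 2 ≤ energyForm ι S ρ u u := by
  rw [energyForm_apply_self]
  exact le_add_of_nonneg_left (mul_nonneg hρ (hpsd u))

end EnergyForm

/-- Cea-type a priori estimate for the Galerkin solution `u_{ρh} ∈ X_h`: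
for every `v_h ∈ X_h`,
`‖ι(u_ρ − u_{ρh})‖_H ≤ √(ρ ⟨S(u_ρ − v_h), u_ρ − v_h⟩ + ‖ι(u_ρ − v_h)‖²)`. -/
theorem stmt_13
    {H X : Type*} [NormedAddCommGroup H] [InnerProductSpace ℝ H]
    [NormedAddCommGroup X] [NormedSpace ℝ X]
    (ι : X →L[ℝ] H) (S : X →L[ℝ] StrongDual ℝ X)
    (hsym : ∀ u v : X, S u v = S v u)
    (hpsd : ∀ u : X, 0 ≤ S u u)
    (ρ : ℝ) (hρ : 0 < ρ) (ubar : H) (uρ : X)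
    (hvar : ∀ v : X, ρ * S uρ v + ⟪ι uρ, ι v⟫ = ⟪ubar, ι v⟫)
    (Xh : Submodule ℝ X) (uρh : X) (huρh : uρh ∈ Xh)
    (hgal : ∀ vh ∈ Xh, ρ * S uρh vh + ⟪ι uρh, ι vh⟫ = ⟪ubar, ι vh⟫) :
    ∀ vh ∈ Xh,
      ‖ι (uρ - uρh)‖ ≤
        Real.sqrt (ρ * S (uρ - vh) (uρ - vh) + ‖ι (uρ - vh)‖ ^ 2) := by
  intro vh hvh
  have horth : ∀ w ∈ Xh, energyForm ι S ρ (uρ - uρh) w = 0 := fun w hw => by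
    rw [map_sub, LinearMap.sub_apply, energyForm_apply, energyForm_apply, hvar w, hgal w hw,
      sub_self]
  have hB := isPosSemidef_energyForm (ι := ι) hsym hpsd hρ.le
  rw [← energyForm_apply_self, Real.le_sqrt (norm_nonneg _) (hB.isNonneg.nonneg _)]
  exact (sq_norm_le_energyForm_apply_self hpsd hρ.le _).trans
    (hB.apply_self_le_of_galerkin_orthogonal huρh horth hvh)
end

section
/- Let X_h be a subspace of X and let u_{ρh} ∈ X_h be the Galerkin solution, i.e., ρ ⟨S u_{ρh}, v_h⟩ + ⟨ι u_{ρh}, ι v_h⟩_H = ⟨ū, ι v_h⟩_H for all v_h ∈ X_h. Then, for a target ū ∈ H, the abstract error estimate ‖ι u_{ρh} − ū‖_H ≤ (1 + √2) ‖ū‖_H holds. -/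
open scoped RealInnerProductSpace

theorem norm_apply_le_of_galerkin
    {H X : Type*} [NormedAddCommGroup H] [InnerProductSpace ℝ H]
    [NormedAddCommGroup X] [NormedSpace ℝ X]
    (ι : X →L[ℝ] H) (S : X →L[ℝ] StrongDual ℝ X) {ρ : ℝ} (hρ : 0 ≤ ρ) {ubar : H} {u : X}
    (hpsd : 0 ≤ S u u) (hu : ρ * S u u + ⟪ι u, ι u⟫ = ⟪ubar, ι u⟫) :
    ‖ι u‖ ≤ ‖ubar‖ := by
  refine norm_le_of_norm_sq_le_inner ?_
  rw [real_inner_self_eq_norm_sq] at hu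
  nlinarith [mul_nonneg hρ hpsd]

theorem stmt_14_general
    {H X : Type*} [NormedAddCommGroup H] [InnerProductSpace ℝ H]
    [NormedAddCommGroup X] [NormedSpace ℝ X]
    (ι : X →L[ℝ] H) (S : X →L[ℝ] StrongDual ℝ X)
    (hpsd : ∀ u : X, 0 ≤ S u u)
    (ρ : ℝ) (hρ : 0 < ρ) (ubar : H)
    (Xh : Submodule ℝ X) (uρh : X) (huρh : uρh ∈ Xh)
    (hgal : ∀ vh ∈ Xh, ρ * S uρh vh + ⟪ι uρh, ι vh⟫ = ⟪ubar, ι vh⟫) :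
    ‖ι uρh - ubar‖ ≤ (1 + Real.sqrt 2) * ‖ubar‖ := by
  have hstab : ‖ι uρh‖ ≤ ‖ubar‖ :=
    norm_apply_le_of_galerkin ι S hρ.le (hpsd uρh) (hgal uρh huρh)
  have hsqrt : (1 : ℝ) ≤ Real.sqrt 2 := Real.one_le_sqrt.mpr one_le_two
  calc ‖ι uρh - ubar‖ ≤ ‖ι uρh‖ + ‖ubar‖ := norm_sub_le _ _
    _ ≤ 2 * ‖ubar‖ := by linarith
    _ ≤ (1 + Real.sqrt 2) * ‖ubar‖ := by gcongr; linarith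

/-- Abstract error estimate for the Galerkin solution and a target `ū ∈ H`:
`‖ι u_{ρh} − ū‖_H ≤ (1 + √2) ‖ū‖_H`. -/
theorem stmt_14
    {H X : Type*} [NormedAddCommGroup H] [InnerProductSpace ℝ H]
    [NormedAddCommGroup X] [NormedSpace ℝ X]
    (ι : X →L[ℝ] H) (S : X →L[ℝ] StrongDual ℝ X)
    (hsym : ∀ u v : X, S u v = S v u)
    (hpsd : ∀ u : X, 0 ≤ S u u)
    (ρ : ℝ) (hρ : 0 < ρ) (ubar : H) (uρ : X)
    (hvar : ∀ v : X, ρ * S uρ v + ⟪ι uρ, ι v⟫ = ⟪ubar, ι v⟫)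
    (Xh : Submodule ℝ X) (uρh : X) (huρh : uρh ∈ Xh)
    (hgal : ∀ vh ∈ Xh, ρ * S uρh vh + ⟪ι uρh, ι vh⟫ = ⟪ubar, ι vh⟫) :
    ‖ι uρh - ubar‖ ≤ (1 + Real.sqrt 2) * ‖ubar‖ :=
  stmt_14_general ι S hpsd ρ hρ ubar Xh uρh huρh hgal
end

section
/- Let X_h be a subspace of X on which the inverse inequality ‖v_h‖_X ≤ c_I h^{-1} ‖ι v_h‖_H holds for all v_h ∈ X_h, with constants c_I > 0 and h > 0. Let u_{ρh} ∈ X_h satisfy ρ ⟨S u_{ρh}, v_h⟩ + ⟨ι u_{ρh}, ι v_h⟩_H = ⟨ū, ι v_h⟩_H for all v_h ∈ X_h, and let ũ_{ρh} ∈ X_h satisfy the perturbed equation ρ ⟨S̃ ũ_{ρh}, v_h⟩ + ⟨ι ũ_{ρh}, ι v_h⟩_H = ⟨ū, ι v_h⟩_H for all v_h ∈ X_h. Then ‖ι(ũ_{ρh} − u_{ρh})‖_H ≤ c_I ρ h^{-1} ‖(S − S̃) u_{ρh}‖_{X*}. -/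
/-!
Subtracting the two Galerkin equations tested with the error `e = ũ_{ρh} − u_{ρh} ∈ X_h` gives
`‖ι e‖² = ρ (⟨S u_{ρh}, e⟩ − ⟨S̃ ũ_{ρh}, e⟩) = ρ (⟨(S − S̃) u_{ρh}, e⟩ − ⟨S̃ e, e⟩)`.
Dropping the nonnegative term `⟨S̃ e, e⟩` and bounding the dual pairing yields
`‖ι e‖² ≤ ρ ‖(S − S̃) u_{ρh}‖_{X*} ‖e‖_X`, and the inverse inequality turns `‖e‖_X` into
`c_I h⁻¹ ‖ι e‖_H`, so one factor `‖ι e‖_H` cancels.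
-/

open scoped RealInnerProductSpace

lemma le_of_mul_self_le_mul {a C : ℝ} (hC : 0 ≤ C) (h : a * a ≤ C * a) :
    a ≤ C := by
  by_contra! hlt
  nlinarith

section Galerkin

variable {H X : Type*} [NormedAddCommGroup H] [InnerProductSpace ℝ H]
  [NormedAddCommGroup X] [NormedSpace ℝ X]

lemma inner_sub_eq_of_galerkin (ι : X →L[ℝ] H) (S Stilde : X →L[ℝ] StrongDual ℝ X)
    {ρ : ℝ} {ubar : H} {u ut v : X}
    (hu : ρ * S u v + ⟪ι u, ι v⟫ = ⟪ubar, ι v⟫)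
    (hut : ρ * Stilde ut v + ⟪ι ut, ι v⟫ = ⟪ubar, ι v⟫) :
    ⟪ι (ut - u), ι v⟫ = ρ * (S u v - Stilde ut v) := by
  rw [map_sub, inner_sub_left]
  linarith

lemma apply_sub_apply_le_of_nonneg (S Stilde : X →L[ℝ] StrongDual ℝ X)
    (hpsd : ∀ w : X, 0 ≤ Stilde w w) (u ut : X) :
    S u (ut - u) - Stilde ut (ut - u) ≤ (S - Stilde) u (ut - u) := by
  have hsplit : Stilde ut (ut - u) = Stilde u (ut - u) + Stilde (ut - u) (ut - u) := by
    rw [← add_apply, ← map_add, add_sub_cancel]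
  rw [sub_apply, sub_apply, hsplit]
  linarith [hpsd (ut - u)]

lemma norm_mul_self_le_of_galerkin (ι : X →L[ℝ] H) (S Stilde : X →L[ℝ] StrongDual ℝ X)
    (hpsd : ∀ w : X, 0 ≤ Stilde w w) {ρ : ℝ} (hρ : 0 ≤ ρ) {ubar : H} {u ut : X}
    (hu : ρ * S u (ut - u) + ⟪ι u, ι (ut - u)⟫ = ⟪ubar, ι (ut - u)⟫)
    (hut : ρ * Stilde ut (ut - u) + ⟪ι ut, ι (ut - u)⟫ = ⟪ubar, ι (ut - u)⟫) :
    ‖ι (ut - u)‖ * ‖ι (ut - u)‖ ≤ ρ * (‖S u - Stilde u‖ * ‖ut - u‖) := by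
  rw [← real_inner_self_eq_norm_mul_norm, inner_sub_eq_of_galerkin ι S Stilde hu hut]
  gcongr
  calc S u (ut - u) - Stilde ut (ut - u)
      ≤ (S - Stilde) u (ut - u) := apply_sub_apply_le_of_nonneg S Stilde hpsd u ut
    _ ≤ ‖S u - Stilde u‖ * ‖ut - u‖ := (le_abs_self _).trans ((S u - Stilde u).le_opNorm _)

end Galerkin

/-- Perturbation estimate: if the inverse inequality
`‖v_h‖_X ≤ c_I h⁻¹ ‖ι v_h‖_H` holds on `X_h`, `u_{ρh} ∈ X_h` is the Galerkin
solution and `ũ_{ρh} ∈ X_h` the perturbed Galerkin solution, then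
`‖ι(ũ_{ρh} − u_{ρh})‖_H ≤ c_I ρ h⁻¹ ‖(S − S̃) u_{ρh}‖_{X*}`. -/
theorem stmt_17
    {H X : Type*} [NormedAddCommGroup H] [InnerProductSpace ℝ H]
    [NormedAddCommGroup X] [NormedSpace ℝ X]
    (ι : X →L[ℝ] H)
    (S Stilde : X →L[ℝ] StrongDual ℝ X)
    (hpsd : ∀ w : X, 0 ≤ Stilde w w)
    (ρ : ℝ) (hρ : 0 < ρ) (ubar : H)
    (Xh : Submodule ℝ X) (cI h : ℝ) (hcI : 0 < cI) (hh : 0 < h)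
    (hinv : ∀ vh ∈ Xh, ‖vh‖ ≤ cI * h⁻¹ * ‖ι vh‖)
    (uρh : X) (huρh : uρh ∈ Xh)
    (hgal : ∀ vh ∈ Xh, ρ * S uρh vh + ⟪ι uρh, ι vh⟫ = ⟪ubar, ι vh⟫)
    (utρh : X) (hutρh : utρh ∈ Xh)
    (hpert : ∀ vh ∈ Xh, ρ * Stilde utρh vh + ⟪ι utρh, ι vh⟫ = ⟪ubar, ι vh⟫) :
    ‖ι (utρh - uρh)‖ ≤ cI * ρ * h⁻¹ * ‖S uρh - Stilde uρh‖ := by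
  have he : utρh - uρh ∈ Xh := Xh.sub_mem hutρh huρh
  refine le_of_mul_self_le_mul (by positivity) ?_
  calc ‖ι (utρh - uρh)‖ * ‖ι (utρh - uρh)‖
      ≤ ρ * (‖S uρh - Stilde uρh‖ * ‖utρh - uρh‖) :=
        norm_mul_self_le_of_galerkin ι S Stilde hpsd hρ.le (hgal _ he) (hpert _ he)
    _ ≤ ρ * (‖S uρh - Stilde uρh‖ * (cI * h⁻¹ * ‖ι (utρh - uρh)‖)) := by
        gcongr
        exact hinv _ he
    _ = cI * ρ * h⁻¹ * ‖S uρh - Stilde uρh‖ * ‖ι (utρh - uρh)‖ := by ring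
end
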